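/- arXiv:2303.01045 — 2 statements merged into one kernel-verified Lean document; each statement's English description precedes it below -/
import Mathlib

section
/- If G is a finite abelian group of diagonal 2×2 complex matrices that is not cyclic, then G contains a non-trivial pseudo-reflection, i.e., a non-identity element with 1 as one of its diagonal entries. -/
open Matrix

/-- A finite abelian group of diagonal 2×2 complex matrices that is not cyclic
contains a non-trivial pseudo-reflection, i.e. a non-identity element with `1`
as one of its diagonal entries. -/
theorem noncyclic_diagonal_group_has_pseudoReflection
    (G : Subgroup (GL (Fin 2) ℂ)) [Finite G]
    (hdiag : ∀ g ∈ G, ((g : GL (Fin 2) ℂ) : Matrix (Fin 2) (Fin 2) ℂ).IsDiag)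
    (hab : ∀ a b : ↥G, a * b = b * a)
    (hnc : ¬ IsCyclic ↥G) :
    ∃ g ∈ G, g ≠ 1 ∧
      (((g : GL (Fin 2) ℂ) : Matrix (Fin 2) (Fin 2) ℂ) 0 0 = 1 ∨
       ((g : GL (Fin 2) ℂ) : Matrix (Fin 2) (Fin 2) ℂ) 1 1 = 1) := by
  classical
  let f : ↥G →* ℂ :=
  { toFun := fun g => (((g : GL (Fin 2) ℂ) : Matrix (Fin 2) (Fin 2) ℂ)) 0 0
    map_one' := by simp
    map_mul' := by
      intro a b
      have ha := hdiag (a : GL (Fin 2) ℂ) a.2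
      have h01 : ((a : GL (Fin 2) ℂ) : Matrix (Fin 2) (Fin 2) ℂ) 0 1 = 0 :=
        ha (by decide)
      show (((a * b : ↥G) : GL (Fin 2) ℂ) : Matrix (Fin 2) (Fin 2) ℂ) 0 0 = _
      have hmul : (((a * b : ↥G) : GL (Fin 2) ℂ) : Matrix (Fin 2) (Fin 2) ℂ)
          = ((a : GL (Fin 2) ℂ) : Matrix (Fin 2) (Fin 2) ℂ)
            * ((b : GL (Fin 2) ℂ) : Matrix (Fin 2) (Fin 2) ℂ) := rfl
      rw [hmul, Matrix.mul_apply, Fin.sum_univ_two, h01]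
      ring }
  have hni : ¬ Function.Injective f := fun hinj =>
    hnc (isCyclic_of_subgroup_isDomain f hinj)
  rw [Function.not_injective_iff] at hni
  obtain ⟨a, b, hfab, hne⟩ := hni
  refine ⟨((a * b⁻¹ : ↥G) : GL (Fin 2) ℂ), (a * b⁻¹ : ↥G).2, ?_, Or.inl ?_⟩
  · intro h
    apply hne
    have : (a * b⁻¹ : ↥G) = 1 := Subtype.ext h
    have := mul_inv_eq_one.mp this
    exact this
  · have hb : f b * f b⁻¹ = 1 := by rw [← _root_.map_mul]; simp
    have : f (a * b⁻¹) = 1 := by rw [_root_.map_mul, hfab, hb]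
    exact this
end

section
/- Let (R, M) be a Noetherian local ring and h₁, h₂ ∈ M elements such that the quotient R/(h₁, h₂) has length at most d as an R-module. Then the maximal ideal M can be generated by at most d + 1 elements. -/
/-- `M` has length at most `d` as an `R`-module: every strictly increasing chain of
submodules of `M` has at most `d + 1` terms. -/
def ModuleLengthLE (R M : Type*) [CommRing R] [AddCommGroup M] [Module R M] (d : ℕ) : Prop :=
  ∀ (k : ℕ) (c : Fin (k + 1) → Submodule R M), StrictMono c → k ≤ d

/-!
A module of length `n` is generated by `n` elements: peel off a cyclic submodule `R ∙ x`,
which drops the length of the quotient by at least one, and lift generators of the quotient.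
In `R ⧸ (h₁, h₂)` the image of the maximal ideal is a proper submodule, so its length is at
most `d - 1`; lifting its generators and adding `h₁, h₂` gives at most `d + 1` generators.
-/

open IsLocalRing Order Submodule

theorem ModuleLengthLE.length_le {R M : Type*} [CommRing R] [AddCommGroup M] [Module R M] {d : ℕ}
    (h : ModuleLengthLE R M d) : Module.length R M ≤ d := by
  rw [Module.length_eq_height]
  exact height_le fun p _ => by exact_mod_cast h p.length p p.strictMono

section

variable {R M : Type*} [Ring R] [AddCommGroup M] [Module R M]

theorem Submodule.exists_finset_card_le_sup_span_eq {N P : Submodule R M} (hNP : N ≤ P)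
    (s : Finset (M ⧸ N)) (hs : span R (s : Set (M ⧸ N)) = P.map N.mkQ) :
    ∃ t : Finset M, t.card ≤ s.card ∧ N ⊔ span R (t : Set M) = P := by
  classical
  let lift := Function.surjInv N.mkQ_surjective
  refine ⟨s.image lift, Finset.card_image_le, ?_⟩
  have hlift : N.mkQ '' (s.image lift : Set M) = s := by
    simp [Set.image_image, lift, Function.surjInv_eq]
  rw [← comap_map_mkQ, map_span, hlift, hs, comap_map_mkQ, sup_eq_right.mpr hNP]

theorem Module.exists_finset_card_le_of_length_le (n : ℕ) (h : Module.length R M ≤ n) :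
    ∃ s : Finset M, s.card ≤ n ∧ span R (s : Set M) = ⊤ := by
  classical
  induction n generalizing M with
  | zero =>
    have : Subsingleton M := Module.length_eq_zero_iff.mp (nonpos_iff_eq_zero.mp h)
    exact ⟨∅, le_rfl, Subsingleton.elim _ _⟩
  | succ n ih =>
    rcases subsingleton_or_nontrivial M with hM | hM
    · exact ⟨∅, by simp, Subsingleton.elim _ _⟩
    obtain ⟨x, hx⟩ := exists_ne (0 : M)
    have hquot : Module.length R (M ⧸ R ∙ x) ≤ n := by
      rw [Module.length_eq_coheight, Nat.cast_succ] at h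
      have hx' : ⊥ < R ∙ x := bot_lt_iff_ne_bot.mpr (by simpa using hx)
      rw [Module.length_quotient, ← ENat.add_le_add_iff_right ENat.one_ne_top]
      exact (coheight_add_one_le hx').trans h
    obtain ⟨s, hs_card, hs_span⟩ := ih hquot
    obtain ⟨t, ht_card, ht_span⟩ := exists_finset_card_le_sup_span_eq le_top s
      (by rw [hs_span, Submodule.map_top, range_mkQ])
    refine ⟨insert x t, (Finset.card_insert_le _ _).trans (by omega), ?_⟩
    rw [Finset.coe_insert, span_insert, ht_span]

theorem Submodule.exists_finset_card_le_of_height_le (N : Submodule R M) (n : ℕ)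
    (h : height N ≤ n) : ∃ s : Finset M, s.card ≤ n ∧ span R (s : Set M) = N := by
  rw [← Module.length_submodule] at h
  obtain ⟨s, hs_card, hs_span⟩ := Module.exists_finset_card_le_of_length_le n h
  refine ⟨s.map (Function.Embedding.subtype _), by simpa using hs_card, ?_⟩
  rw [Finset.coe_map, Function.Embedding.coe_subtype, ← N.coe_subtype, span_image, hs_span,
    map_subtype_top]

theorem Submodule.exists_finset_card_lt_sup_span_eq {N P : Submodule R M} (hNP : N ≤ P)
    (hP : P ≠ ⊤) {d : ℕ} (h : Module.length R (M ⧸ N) ≤ d) :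
    ∃ t : Finset M, t.card < d ∧ N ⊔ span R (t : Set M) = P := by
  have hP' : P.map N.mkQ < ⊤ := by
    rwa [lt_top_iff_ne_top, Ne, map_mkQ_eq_top, sup_eq_right.mpr hNP]
  rw [Module.length_eq_height] at h
  have hheight : height (P.map N.mkQ) + 1 ≤ d := (height_add_one_le hP').trans h
  obtain ⟨n, hn⟩ := ENat.ne_top_iff_exists.mp
    (ne_top_of_le_ne_top (ENat.natCast_ne_top d) (le_self_add.trans hheight))
  rw [← hn] at hheight
  obtain ⟨s, hs_card, hs_span⟩ := (P.map N.mkQ).exists_finset_card_le_of_height_le n hn.ge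
  obtain ⟨t, ht_card, ht_span⟩ := exists_finset_card_le_sup_span_eq hNP s hs_span
  have hnd : n + 1 ≤ d := by exact_mod_cast hheight
  exact ⟨t, by omega, ht_span⟩

end

theorem maximalIdeal_generated_by_d_add_one_general
    (R : Type*) [CommRing R] [IsLocalRing R]
    (h₁ h₂ : R) (hh₁ : h₁ ∈ IsLocalRing.maximalIdeal R) (hh₂ : h₂ ∈ IsLocalRing.maximalIdeal R)
    (d : ℕ)
    (hlen : ModuleLengthLE R (R ⧸ Ideal.span {h₁, h₂}) d) :
    ∃ S : Finset R, S.card ≤ d + 1 ∧ Ideal.span (S : Set R) = IsLocalRing.maximalIdeal R := by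
  classical
  have hI : Ideal.span {h₁, h₂} ≤ maximalIdeal R := by
    rw [Ideal.span_le, Set.insert_subset_iff, Set.singleton_subset_iff]
    exact ⟨hh₁, hh₂⟩
  obtain ⟨t, ht_card, ht_span⟩ := exists_finset_card_lt_sup_span_eq hI
    (maximalIdeal.isMaximal R).ne_top hlen.length_le
  refine ⟨{h₁, h₂} ∪ t, ?_, ?_⟩
  · have := Finset.card_union_le {h₁, h₂} t
    have := Finset.card_le_two (a := h₁) (b := h₂)
    omega
  · rw [Finset.coe_union, Finset.coe_pair, Ideal.span_union]
    exact ht_span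

/-- If `(R, M)` is a Noetherian local ring and `h₁, h₂ ∈ M` are such that `R/(h₁, h₂)`
has length at most `d`, then the maximal ideal `M` is generated by at most `d + 1`
elements. -/
theorem maximalIdeal_generated_by_d_add_one
    (R : Type*) [CommRing R] [IsNoetherianRing R] [IsLocalRing R]
    (h₁ h₂ : R) (hh₁ : h₁ ∈ IsLocalRing.maximalIdeal R) (hh₂ : h₂ ∈ IsLocalRing.maximalIdeal R)
    (d : ℕ)
    (hlen : ModuleLengthLE R (R ⧸ Ideal.span {h₁, h₂}) d) :
    ∃ S : Finset R, S.card ≤ d + 1 ∧ Ideal.span (S : Set R) = IsLocalRing.maximalIdeal R :=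
  maximalIdeal_generated_by_d_add_one_general R h₁ h₂ hh₁ hh₂ d hlen
end
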